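/- arXiv:2503.09801 — 3 statements merged into one kernel-verified Lean document; each statement's English description precedes it below -/
import Mathlib

section
/- Let $V \subset \mathbb{R}^l$ be an open connected neighborhood of $0$ and let $q : V \to \mathbb{R}$ be real analytic. Suppose that for every direction $b \in \mathbb{R}^l$ there exists $\delta > 0$ and a $C^1$ curve $a : (-\delta,\delta) \to V$ with $a(0) = 0$, $a'(0) = b$, and $\frac{d}{dt} q(a(t)) = 0$ for all $|t| < \delta$. Then $q$ is constant on $V$. -/
/-!
Expand `q` in its power series `∑ pₙ` at `0`. If the diagonal terms `pₙ (y, …, y)` vanish for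
`0 < n < k`, then along a critical curve `a` with `a' 0 = b` we get
`0 = q (a t) - q 0 = pₖ (a t, …, a t) + O(t ^ (k + 1))`, and by homogeneity
`pₖ (b, …, b) = lim t⁻ᵏ • pₖ (a t, …, a t) = 0`. By induction all diagonal terms of positive
degree vanish, so `q` is constant near `0`, and the identity theorem spreads this over the
connected set `V`.
-/

open Set Filter Topology Asymptotics

theorem eventually_eq_of_eventually_hasDerivAt_zero {𝕜 F : Type*} [RCLike 𝕜]
    [NormedAddCommGroup F] [NormedSpace 𝕜 F] {g : 𝕜 → F} {t₀ : 𝕜}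
    (hg : ∀ᶠ t in 𝓝 t₀, HasDerivAt g 0 t) : ∀ᶠ t in 𝓝 t₀, g t = g t₀ := by
  obtain ⟨ε, hε, hball⟩ := Metric.eventually_nhds_iff_ball.1 hg
  filter_upwards [Metric.ball_mem_nhds t₀ hε] with t ht
  exact Metric.isOpen_ball.is_const_of_deriv_eq_zero (convex_ball t₀ ε).isPreconnected
    (fun s hs => (hball s hs).differentiableAt.differentiableWithinAt)
    (fun s hs => (hball s hs).deriv) ht (Metric.mem_ball_self hε)

variable {𝕜 E F : Type*} [NontriviallyNormedField 𝕜] [NormedAddCommGroup E] [NormedSpace 𝕜 E]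
  [NormedAddCommGroup F] [NormedSpace 𝕜 F]

namespace FormalMultilinearSeries

theorem apply_smul_eq_pow_smul (p : FormalMultilinearSeries 𝕜 E F) (n : ℕ) (c : 𝕜) (y : E) :
    p n (fun _ => c • y) = c ^ n • p n (fun _ => y) := by
  simpa using (p n).map_smul_univ (fun _ => c) (fun _ => y)

theorem partialSum_succ_eq_of_apply_eq_zero (p : FormalMultilinearSeries 𝕜 E F) {k : ℕ}
    (hk : 0 < k) (hlow : ∀ n, 0 < n → n < k → ∀ y : E, p n (fun _ => y) = 0) (y : E) :
    p.partialSum (k + 1) y = p 0 (fun _ => y) + p k (fun _ => y) := by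
  rw [partialSum, Finset.sum_range_succ, Finset.sum_eq_single_of_mem 0 (Finset.mem_range.2 hk)]
  intro n hn hn0
  exact hlow n (Nat.pos_of_ne_zero hn0) (Finset.mem_range.1 hn) y

end FormalMultilinearSeries

namespace HasFPowerSeriesAt

variable {f : E → F} {p : FormalMultilinearSeries 𝕜 E F} {x : E}

theorem apply_eq_zero_of_curve (hf : HasFPowerSeriesAt f p x) {k : ℕ} (hk : 0 < k)
    (hlow : ∀ n, 0 < n → n < k → ∀ y : E, p n (fun _ => y) = 0)
    {a : 𝕜 → E} {b : E} (hax : a 0 = x) (ha : HasDerivAt a b 0)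
    (hconst : ∀ᶠ t in 𝓝 0, f (a t) = f x) : p k (fun _ => b) = 0 := by
  set P : E → F := fun y => p k (fun _ => y)
  have hdisp : (fun t => a t - x) =O[𝓝 0] fun t => t := by
    simpa [hax] using ha.isBigO_sub
  have hdisp_tendsto : Tendsto (fun t => a t - x) (𝓝 0) (𝓝 0) := by
    simpa [hax] using ha.continuousAt.tendsto.sub_const x
  have hP : (fun t => P (a t - x)) =O[𝓝 0] fun t => t ^ (k + 1) := by
    have htaylor := (hf.isBigO_sub_partialSum_pow (k + 1)).comp_tendsto hdisp_tendsto
    refine isBigO_neg_left.1 <| (htaylor.trans (hdisp.norm_left.pow (k + 1))).congr' ?_ .rfl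
    filter_upwards [hconst] with t ht
    simp [p.partialSum_succ_eq_of_apply_eq_zero hk hlow, ht, hf.coeff_zero, P]
  have hslope : Tendsto (fun t => t⁻¹ • (a t - x)) (𝓝[≠] 0) (𝓝 b) := by
    refine (hasDerivAt_iff_tendsto_slope.1 ha).congr fun t => ?_
    simp [slope_def_module, hax]
  have hlim : Tendsto (fun t => P (t⁻¹ • (a t - x))) (𝓝[≠] 0) (𝓝 (P b)) :=
    ((by fun_prop : Continuous P).tendsto b).comp hslope
  have hzero : Tendsto (fun t => P (t⁻¹ • (a t - x))) (𝓝[≠] 0) (𝓝 0) := by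
    have : (fun t => P (t⁻¹ • (a t - x))) =O[𝓝[≠] 0] fun t => t := by
      refine ((isBigO_refl (fun t : 𝕜 => t⁻¹ ^ k) _).smul
        (hP.mono nhdsWithin_le_nhds)).congr' ?_ ?_
      · exact Eventually.of_forall fun t => (p.apply_smul_eq_pow_smul k _ _).symm
      · filter_upwards [self_mem_nhdsWithin] with t (ht : t ≠ 0)
        rw [smul_eq_mul, inv_pow, pow_succ, ← mul_assoc, inv_mul_cancel₀ (pow_ne_zero k ht),
          one_mul]
    exact this.trans_tendsto (tendsto_id.mono_left nhdsWithin_le_nhds)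
  exact tendsto_nhds_unique hlim hzero

theorem apply_eq_zero_of_forall_curve (hf : HasFPowerSeriesAt f p x)
    (hcurve : ∀ b : E, ∃ a : 𝕜 → E, a 0 = x ∧ HasDerivAt a b 0 ∧ ∀ᶠ t in 𝓝 0, f (a t) = f x)
    {n : ℕ} (hn : 0 < n) (y : E) : p n (fun _ => y) = 0 := by
  induction n using Nat.strong_induction_on generalizing y with
  | _ n ih =>
    obtain ⟨a, hax, ha, hconst⟩ := hcurve y
    exact hf.apply_eq_zero_of_curve hn (fun m hm hmn => ih m hmn hm) hax ha hconst

theorem eventuallyEq_const_of_apply_eq_zero (hf : HasFPowerSeriesAt f p x)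
    (h : ∀ n, 0 < n → ∀ y : E, p n (fun _ => y) = 0) : f =ᶠ[𝓝 x] fun _ => f x := by
  filter_upwards [hf.eventually_hasSum_sub] with y hy
  refine hy.unique ?_
  rw [← hf.coeff_zero (fun _ => y - x)]
  exact hasSum_single 0 fun n hn => h n (Nat.pos_of_ne_zero hn) _

end HasFPowerSeriesAt

theorem AnalyticAt.eventuallyEq_const_of_forall_curve {f : E → F} {x : E}
    (hf : AnalyticAt 𝕜 f x)
    (hcurve : ∀ b : E, ∃ a : 𝕜 → E, a 0 = x ∧ HasDerivAt a b 0 ∧ ∀ᶠ t in 𝓝 0, f (a t) = f x) :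
    f =ᶠ[𝓝 x] fun _ => f x :=
  let ⟨_, hp⟩ := hf
  hp.eventuallyEq_const_of_apply_eq_zero fun _ hn => hp.apply_eq_zero_of_forall_curve hcurve hn

/-- If a real analytic function `q` on an open connected neighborhood `V` of `0` in
`ℝˡ` admits, in every direction `b`, a `C¹` curve through `0` with velocity `b`
along which `q` is critical (`(q ∘ a)' ≡ 0`), then `q` is constant on `V`. -/
theorem analytic_constant_of_critical_curves (l : ℕ)
    (V : Set (EuclideanSpace ℝ (Fin l))) (hVopen : IsOpen V) (hVconn : IsConnected V)
    (hV0 : (0 : EuclideanSpace ℝ (Fin l)) ∈ V)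
    (q : EuclideanSpace ℝ (Fin l) → ℝ) (hq : AnalyticOn ℝ q V)
    (hcurves : ∀ b : EuclideanSpace ℝ (Fin l), ∃ δ > (0 : ℝ),
      ∃ a : ℝ → EuclideanSpace ℝ (Fin l),
        (∀ t ∈ Ioo (-δ) δ, a t ∈ V) ∧ a 0 = 0 ∧ HasDerivAt a b 0 ∧
        ContDiffOn ℝ 1 a (Ioo (-δ) δ) ∧
        ∀ t ∈ Ioo (-δ) δ, HasDerivAt (fun s => q (a s)) 0 t) :
    ∀ x ∈ V, q x = q 0 := by
  have hqV : AnalyticOnNhd ℝ q V := hVopen.analyticOn_iff_analyticOnNhd.1 hq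
  have hq0 : q =ᶠ[𝓝 0] fun _ => q 0 := by
    refine (hqV 0 hV0).eventuallyEq_const_of_forall_curve fun b => ?_
    obtain ⟨δ, hδ, a, -, ha0, hab, -, hcrit⟩ := hcurves b
    have hconst := eventually_eq_of_eventually_hasDerivAt_zero
      (eventually_of_mem (Ioo_mem_nhds (neg_neg_of_pos hδ) hδ) hcrit)
    exact ⟨a, ha0, hab, by simpa only [ha0] using hconst⟩
  exact fun x hx => hqV.eqOn_of_preconnected_of_eventuallyEq analyticOnNhd_const
    hVconn.isPreconnected hV0 hq0 hx
end

section
/- Let $q : V \to \mathbb{R}$ be real analytic near $0 \in \mathbb{R}^l$ with $\nabla q(0) = 0$, satisfying the Łojasiewicz inequality: there exist $C_L > 0$, $\alpha \ge 2$, and a neighborhood $U \ni 0$ such that for every $a \in U$ there is $a' \in U$ with $q(a') = q(0)$ and $q(a) - q(0) \ge C_L |a - a'|^{\alpha}$. Suppose additionally $Q : U \times W \to \mathbb{R}$ satisfies $Q(a,w) - q(a) \ge \mu \|w\|^2$ for all $(a,w)$, where $W$ is a normed space and $\mu > 0$. Then with $\gamma := \max\{0, \alpha - 2\}$ there is $C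 > 0$ such that $Q(a,w) - q(0) \ge C\, (|a - a'| + \|w\|)^{2+\gamma}$ for all $(a,w) \in U \times W$ with $|a-a'| + \|w\| \le 1$. -/
/-- Combination lemma: a Łojasiewicz inequality on a finite-dimensional critical
manifold together with quadratic coercivity in the transverse directions yields a
stability inequality with exponent `2 + γ`, `γ = max{0, α - 2}`. -/
theorem lojasiewicz_plus_coercivity_stability (l : ℕ)
    {W : Type*} [NormedAddCommGroup W]
    (U : Set (EuclideanSpace ℝ (Fin l))) (hU : U ∈ nhds (0 : EuclideanSpace ℝ (Fin l)))
    (q : EuclideanSpace ℝ (Fin l) → ℝ) (hqa : AnalyticAt ℝ q 0)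
    (hcrit : fderiv ℝ q 0 = 0)
    (CL α : ℝ) (hCL : 0 < CL) (hα : 2 ≤ α)
    (a' : EuclideanSpace ℝ (Fin l) → EuclideanSpace ℝ (Fin l))
    (hLoj : ∀ a ∈ U, a' a ∈ U ∧ q (a' a) = q 0 ∧ q a - q 0 ≥ CL * ‖a - a' a‖ ^ α)
    (Q : EuclideanSpace ℝ (Fin l) → W → ℝ) (μ : ℝ) (hμ : 0 < μ)
    (hcoerc : ∀ a ∈ U, ∀ w : W, Q a w - q a ≥ μ * ‖w‖ ^ 2) :
    ∃ C > (0 : ℝ), ∀ a ∈ U, ∀ w : W, ‖a - a' a‖ + ‖w‖ ≤ 1 →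
      Q a w - q 0 ≥ C * (‖a - a' a‖ + ‖w‖) ^ (2 + max 0 (α - 2)) := by
  have hαpos : (0 : ℝ) < α := by linarith
  have h2pos : (0 : ℝ) < (2 : ℝ) ^ α := Real.rpow_pos_of_pos (by norm_num) α
  refine ⟨min μ CL / 2 ^ α, by positivity, ?_⟩
  intro a ha w hle
  have hexp : (2 : ℝ) + max 0 (α - 2) = α := by
    rw [max_eq_right (by linarith)]; ring
  rw [hexp]
  set s := ‖a - a' a‖ with hsdef
  set t := ‖w‖ with htdef
  have hs : 0 ≤ s := norm_nonneg _
  have ht : 0 ≤ t := norm_nonneg _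
  have ht1 : t ≤ 1 := by linarith
  have h1 := (hLoj a ha).2.2
  have h2 := hcoerc a ha w
  -- t^α ≤ t^2
  have htα : t ^ α ≤ t ^ (2 : ℕ) := by
    rcases eq_or_lt_of_le ht with h | h
    · rw [← h, Real.zero_rpow hαpos.ne']
      positivity
    · calc t ^ α ≤ t ^ (2 : ℝ) := Real.rpow_le_rpow_of_exponent_ge h ht1 hα
        _ = t ^ (2 : ℕ) := Real.rpow_natCast t 2
  -- (s+t)^α ≤ 2^α * (s^α + t^α)
  have hsum : (s + t) ^ α ≤ 2 ^ α * (s ^ α + t ^ α) := by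
    have hmax : s + t ≤ 2 * max s t := by
      rcases le_total s t with h | h
      · rw [max_eq_right h]; linarith
      · rw [max_eq_left h]; linarith
    calc (s + t) ^ α ≤ (2 * max s t) ^ α :=
          Real.rpow_le_rpow (by linarith) hmax hαpos.le
      _ = 2 ^ α * (max s t) ^ α :=
          Real.mul_rpow (by norm_num) (le_max_of_le_left hs)
      _ ≤ 2 ^ α * (s ^ α + t ^ α) := by
          gcongr
          rcases le_total s t with h | h
          · rw [max_eq_right h]
            nlinarith [Real.rpow_nonneg hs α]
          · rw [max_eq_left h]
            nlinarith [Real.rpow_nonneg ht α]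
  have hmin : min μ CL * (s ^ α + t ^ α) ≤ CL * s ^ α + μ * t ^ 2 := by
    have h3 : min μ CL * s ^ α ≤ CL * s ^ α :=
      mul_le_mul_of_nonneg_right (min_le_right _ _) (Real.rpow_nonneg hs α)
    have h4 : min μ CL * t ^ α ≤ μ * t ^ 2 := by
      calc min μ CL * t ^ α ≤ μ * t ^ α :=
            mul_le_mul_of_nonneg_right (min_le_left _ _) (Real.rpow_nonneg ht α)
        _ ≤ μ * t ^ 2 := by
            exact mul_le_mul_of_nonneg_left htα hμ.le
      
    linarith [mul_add (min μ CL) (s ^ α) (t ^ α)]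
  have final : min μ CL / 2 ^ α * (s + t) ^ α ≤ CL * s ^ α + μ * t ^ 2 := by
    have hmp : 0 < min μ CL := lt_min hμ hCL
    have : min μ CL / 2 ^ α * (s + t) ^ α ≤ min μ CL / 2 ^ α * (2 ^ α * (s ^ α + t ^ α)) := by
      gcongr
    calc min μ CL / 2 ^ α * (s + t) ^ α
        ≤ min μ CL / 2 ^ α * (2 ^ α * (s ^ α + t ^ α)) := this
      _ = min μ CL * (s ^ α + t ^ α) := by field_simp
      _ ≤ CL * s ^ α + μ * t ^ 2 := hmin
  linarith
end

section
/- Let $X$ be a metric space, $\mathcal{M} \subset X$ a compact set, and suppose for every $v \in \mathcal{M}$ there exist $\delta(v) > 0$, $C(v) > 0$, $\gamma(v) \ge 0$ and a function $f : X \to \mathbb{R}$ with $f \ge 0$, $f = 0$ on $\mathcal{M}$, such that $f(u) \ge C(v)\, d(u,\mathcal{M})^{2+\gamma(v)}$ for all $u \in B(v, \delta(v))$. Assume further that every sequence $(u_k)$ with $f(u_k) \to 0$ and $d(u_k,\mathcal{M})$ bounded has a subsequence converging to a point of $\mathcal{M}$, and that $d(\cdot, \mathcal{M})$ is bounded on $X$.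 Then there exist global constants $C > 0$ and $\gamma \ge 0$ with $f(u) \ge C\, d(u,\mathcal{M})^{2+\gamma}$ for all $u \in X$. -/
/-- Abstract local-to-global stability principle: local stability estimates near
each point of a compact set `M` of minimizers, together with compactness of
minimizing sequences and boundedness of the distance, yield a global stability
estimate with a single constant and exponent. -/
theorem local_to_global_stability
    {X : Type*} [MetricSpace X]
    (M : Set X) (hMne : M.Nonempty) (hMcpt : IsCompact M)
    (f : X → ℝ) (hf0 : ∀ u, 0 ≤ f u) (hfM : ∀ u ∈ M, f u = 0)
    (hlocal : ∀ v ∈ M, ∃ δ > (0 : ℝ), ∃ C > (0 : ℝ), ∃ γ ≥ (0 : ℝ),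
      ∀ u ∈ Metric.ball v δ, f u ≥ C * Metric.infDist u M ^ (2 + γ))
    (hcpt : ∀ u : ℕ → X, Filter.Tendsto (fun k => f (u k)) Filter.atTop (nhds 0) →
      (∃ D : ℝ, ∀ k, Metric.infDist (u k) M ≤ D) →
      ∃ (v : X) (_ : v ∈ M) (ψ : ℕ → ℕ), StrictMono ψ ∧
        Filter.Tendsto (fun k => u (ψ k)) Filter.atTop (nhds v))
    (hbdd : ∃ D : ℝ, ∀ u : X, Metric.infDist u M ≤ D) :
    ∃ C > (0 : ℝ), ∃ γ ≥ (0 : ℝ),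
      ∀ u : X, f u ≥ C * Metric.infDist u M ^ (2 + γ) := by
  classical
  choose δ hδ C hC γ hγ hest using hlocal
  obtain ⟨t, ht⟩ := hMcpt.elim_nhds_subcover' (fun v hv => Metric.ball v (δ v hv / 2))
    (fun v hv => Metric.ball_mem_nhds v (by linarith [hδ v hv]))
  have htne : t.Nonempty := by
    rcases hMne with ⟨v, hv⟩
    rcases Set.mem_iUnion₂.1 (ht hv) with ⟨x, hx, _⟩
    exact ⟨x, hx⟩
  set Γ := t.sup' htne (fun x => γ x.1 x.2) with hΓdef
  have hΓ0 : 0 ≤ Γ := by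
    rcases htne with ⟨x, hx⟩
    exact le_trans (hγ x.1 x.2) (Finset.le_sup' (fun x : M => γ x.1 x.2) hx)
  set C₀ := t.inf' htne (fun x => C x.1 x.2) with hC₀def
  have hC₀ : 0 < C₀ := by
    rcases Finset.exists_mem_eq_inf' htne (fun x => C x.1 x.2) with ⟨x, hx, hxe⟩
    rw [hC₀def, hxe]; exact hC x.1 x.2
  set ε := min (t.inf' htne (fun x => δ x.1 x.2 / 2)) 1 with hεdef
  have hε0 : 0 < ε := by
    apply lt_min _ one_pos
    rcases Finset.exists_mem_eq_inf' htne (fun x => δ x.1 x.2 / 2) with ⟨x, hx, hxe⟩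
    rw [hxe]; linarith [hδ x.1 x.2]
  -- Near estimate
  have hnear : ∀ u : X, Metric.infDist u M < ε →
      C₀ * Metric.infDist u M ^ (2 + Γ) ≤ f u := by
    intro u hu
    rcases eq_or_lt_of_le (Metric.infDist_nonneg (x := u) (s := M)) with hd0 | hd0
    · rw [← hd0, Real.zero_rpow (by positivity), mul_zero]; exact hf0 u
    · obtain ⟨w, hwM, hw⟩ := (Metric.infDist_lt_iff hMne).1 hu
      rcases Set.mem_iUnion₂.1 (ht hwM) with ⟨x, hx, hwx⟩
      have hballx : u ∈ Metric.ball x.1 (δ x.1 x.2) := by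
        have h1 : ε ≤ δ x.1 x.2 / 2 :=
          le_trans (min_le_left _ _) (Finset.inf'_le _ hx)
        have h2 : dist w x.1 < δ x.1 x.2 / 2 := Metric.mem_ball.1 hwx
        have h3 : dist u w < ε := lt_of_le_of_lt (le_of_eq rfl)
          (lt_of_lt_of_le hw (le_of_eq rfl))
        have := dist_triangle u w x.1
        have : dist u x.1 < ε + δ x.1 x.2 / 2 := by
          calc dist u x.1 ≤ dist u w + dist w x.1 := dist_triangle u w x.1
            _ < ε + δ x.1 x.2 / 2 := add_lt_add h3 h2
        exact Metric.mem_ball.2 (by linarith)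
      have hest' := hest x.1 x.2 u hballx
      have hdle1 : Metric.infDist u M ≤ 1 :=
        le_of_lt (lt_of_lt_of_le hu (min_le_right _ _))
      have hexp : 2 + γ x.1 x.2 ≤ 2 + Γ := by
        have := Finset.le_sup' (fun x : M => γ x.1 x.2) hx
        linarith
      have hmono : Metric.infDist u M ^ (2 + Γ) ≤ Metric.infDist u M ^ (2 + γ x.1 x.2) :=
        Real.rpow_le_rpow_of_exponent_ge hd0 hdle1 hexp
      have hCle : C₀ ≤ C x.1 x.2 := Finset.inf'_le _ hx
      calc C₀ * Metric.infDist u M ^ (2 + Γ)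
          ≤ C x.1 x.2 * Metric.infDist u M ^ (2 + γ x.1 x.2) :=
            mul_le_mul hCle hmono (Real.rpow_nonneg Metric.infDist_nonneg _)
              (le_of_lt (hC x.1 x.2))
        _ ≤ f u := hest'
  -- Far estimate
  have hfar : ∃ m > (0 : ℝ), ∀ u : X, ε ≤ Metric.infDist u M → m ≤ f u := by
    by_contra h
    push_neg at h
    have hseq : ∀ k : ℕ, ∃ u : X, ε ≤ Metric.infDist u M ∧ f u < 1 / (k + 1) := by
      intro k
      obtain ⟨u, hu1, hu2⟩ := h (1 / (k + 1)) (by positivity)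
      exact ⟨u, hu1, hu2⟩
    choose u hu1 hu2 using hseq
    have htend : Filter.Tendsto (fun k => f (u k)) Filter.atTop (nhds 0) := by
      apply squeeze_zero (fun k => hf0 _) (fun k => le_of_lt (hu2 k))
      exact tendsto_one_div_add_atTop_nhds_zero_nat
    obtain ⟨D, hD⟩ := hbdd
    obtain ⟨v, hvM, ψ, hψ, hconv⟩ := hcpt u htend ⟨D, fun k => hD (u k)⟩
    have hdist : Filter.Tendsto (fun k => Metric.infDist (u (ψ k)) M) Filter.atTop
        (nhds (Metric.infDist v M)) :=
      ((Metric.continuous_infDist_pt M).continuousAt.tendsto).comp hconv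
    have hle : ε ≤ Metric.infDist v M :=
      ge_of_tendsto hdist (Filter.Eventually.of_forall fun k => hu1 _)
    rw [Metric.infDist_zero_of_mem hvM] at hle
    linarith
  obtain ⟨m, hm, hmf⟩ := hfar
  obtain ⟨D, hD⟩ := hbdd
  set D' := max D 1 with hD'def
  have hD'0 : (0 : ℝ) < D' := lt_of_lt_of_le one_pos (le_max_right _ _)
  have hpow : 0 < D' ^ (2 + Γ) := Real.rpow_pos_of_pos hD'0 _
  refine ⟨min C₀ (m / D' ^ (2 + Γ)), lt_min hC₀ (div_pos hm hpow), Γ, hΓ0, fun u => ?_⟩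
  rw [ge_iff_le]
  rcases lt_or_ge (Metric.infDist u M) ε with hlt | hge
  · calc min C₀ (m / D' ^ (2 + Γ)) * Metric.infDist u M ^ (2 + Γ)
        ≤ C₀ * Metric.infDist u M ^ (2 + Γ) :=
          mul_le_mul_of_nonneg_right (min_le_left _ _)
            (Real.rpow_nonneg Metric.infDist_nonneg _)
      _ ≤ f u := hnear u hlt
  · have hd : Metric.infDist u M ≤ D' := le_trans (hD u) (le_max_left _ _)
    calc min C₀ (m / D' ^ (2 + Γ)) * Metric.infDist u M ^ (2 + Γ)
        ≤ (m / D' ^ (2 + Γ)) * D' ^ (2 + Γ) :=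
          mul_le_mul (min_le_right _ _)
            (Real.rpow_le_rpow Metric.infDist_nonneg hd (by linarith))
            (Real.rpow_nonneg Metric.infDist_nonneg _)
            (le_of_lt (div_pos hm hpow))
      _ = m := div_mul_cancel₀ _ (ne_of_gt hpow)
      _ ≤ f u := hmf u hge
end
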